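/- Let f and g be functions on the tetrablock 𝔼 each admitting a unitary colligation realization. Then the pointwise product fg also admits a unitary colligation realization: if f, g are realized by unitaries V₁ = [[A₁,B₁],[C₁,D₁]] on ℂ ⊕ 𝔥', V₂ = [[A₂,B₂],[C₂,D₂]] on ℂ ⊕ 𝔥'' with representations ρ₁, ρ₂, then the block operator V = [[A₁A₂, (B₁, A₁B₂)], [(C₁A₂; C₂), [[D₁, C₁B₂],[0, D₂]]]] is a unitary on ℂ ⊕ (𝔥' ⊕ 𝔥'') realizing fg with representation ρ = ρ₁ ⊕ ρ₂. -/

import Mathlib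

noncomputable section

open Complex ContinuousLinearMap

def tetraPsi (α : ℂ) (z : ℂ × ℂ × ℂ) : ℂ := (α * z.2.2 - z.1) / (α * z.2.1 - 1)

def tetrablock : Set (ℂ × ℂ × ℂ) :=
  {z | ‖z.2.1‖ < 1 ∧ ∀ α : ℂ, ‖α‖ ≤ 1 → ‖tetraPsi α z‖ < 1}

/-- The eight block equations expressing that `V = [[A,B],[C,D]]` is a unitary on `ℂ ⊕ 𝔥`. -/
def IsUnitaryColl {H : Type*} [NormedAddCommGroup H] [InnerProductSpace ℂ H] [CompleteSpace H]
    (A : ℂ →L[ℂ] ℂ) (B : H →L[ℂ] ℂ) (C : ℂ →L[ℂ] H) (D : H →L[ℂ] H) : Prop :=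
  adjoint A ∘L A + adjoint C ∘L C = 1 ∧
  adjoint A ∘L B + adjoint C ∘L D = 0 ∧
  adjoint B ∘L A + adjoint D ∘L C = 0 ∧
  adjoint B ∘L B + adjoint D ∘L D = 1 ∧
  A ∘L adjoint A + B ∘L adjoint B = 1 ∧
  A ∘L adjoint C + B ∘L adjoint D = 0 ∧
  C ∘L adjoint A + D ∘L adjoint B = 0 ∧
  C ∘L adjoint C + D ∘L adjoint D = 1

namespace ProdColl
variable (E F : Type*) [NormedAddCommGroup E] [InnerProductSpace ℂ E] [CompleteSpace E]
  [NormedAddCommGroup F] [InnerProductSpace ℂ F] [CompleteSpace F]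

set_option linter.unusedSectionVars false

def P1 : WithLp 2 (E × F) →L[ℂ] E :=
  (fst ℂ E F) ∘L (WithLp.prodContinuousLinearEquiv 2 ℂ E F : WithLp 2 (E × F) →L[ℂ] E × F)
def P2 : WithLp 2 (E × F) →L[ℂ] F :=
  (snd ℂ E F) ∘L (WithLp.prodContinuousLinearEquiv 2 ℂ E F : WithLp 2 (E × F) →L[ℂ] E × F)
def J1 : E →L[ℂ] WithLp 2 (E × F) :=
  ((WithLp.prodContinuousLinearEquiv 2 ℂ E F).symm : E × F →L[ℂ] WithLp 2 (E × F)) ∘L inl ℂ E F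
def J2 : F →L[ℂ] WithLp 2 (E × F) :=
  ((WithLp.prodContinuousLinearEquiv 2 ℂ E F).symm : E × F →L[ℂ] WithLp 2 (E × F)) ∘L inr ℂ E F

variable {E F}

@[simp] lemma P1_apply (x : WithLp 2 (E × F)) : P1 E F x = x.fst := rfl
@[simp] lemma P2_apply (x : WithLp 2 (E × F)) : P2 E F x = x.snd := rfl
@[simp] lemma J1_fst (x : E) : (J1 E F x).fst = x := rfl
@[simp] lemma J1_snd (x : E) : (J1 E F x).snd = 0 := rfl
@[simp] lemma J2_fst (x : F) : (J2 E F x).fst = 0 := rfl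
@[simp] lemma J2_snd (x : F) : (J2 E F x).snd = x := rfl

lemma ext_wlp {x y : WithLp 2 (E × F)} (h1 : x.fst = y.fst) (h2 : x.snd = y.snd) : x = y := by
  have : WithLp.equiv 2 (E × F) x = WithLp.equiv 2 (E × F) y := Prod.ext h1 h2
  exact (WithLp.equiv 2 (E × F)).injective this

@[simp] lemma adjoint_P1 : adjoint (P1 E F) = J1 E F := by
  symm; rw [ContinuousLinearMap.eq_adjoint_iff]; intro x y; simp
@[simp] lemma adjoint_P2 : adjoint (P2 E F) = J2 E F := by
  symm; rw [ContinuousLinearMap.eq_adjoint_iff]; intro x y; simp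
@[simp] lemma adjoint_J1 : adjoint (J1 E F) = P1 E F := by
  rw [← adjoint_P1, adjoint_adjoint]
@[simp] lemma adjoint_J2 : adjoint (J2 E F) = P2 E F := by
  rw [← adjoint_P2, adjoint_adjoint]

variable {G H G' H' : Type*}
  [NormedAddCommGroup G] [InnerProductSpace ℂ G] [CompleteSpace G]
  [NormedAddCommGroup H] [InnerProductSpace ℂ H] [CompleteSpace H]
  [NormedAddCommGroup G'] [InnerProductSpace ℂ G'] [CompleteSpace G']
  [NormedAddCommGroup H'] [InnerProductSpace ℂ H'] [CompleteSpace H']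

def rowOp (M : E →L[ℂ] G) (N : F →L[ℂ] G) : WithLp 2 (E × F) →L[ℂ] G :=
  M ∘L P1 E F + N ∘L P2 E F
def colOp (M : G →L[ℂ] E) (N : G →L[ℂ] F) : G →L[ℂ] WithLp 2 (E × F) :=
  J1 E F ∘L M + J2 E F ∘L N
def blkOp (M : E →L[ℂ] G) (N : F →L[ℂ] G) (Q : E →L[ℂ] H) (R : F →L[ℂ] H) :
    WithLp 2 (E × F) →L[ℂ] WithLp 2 (G × H) :=
  colOp (rowOp M N) (rowOp Q R)

@[simp] lemma rowOp_apply (M : E →L[ℂ] G) (N : F →L[ℂ] G) (x : WithLp 2 (E × F)) :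
    rowOp M N x = M x.fst + N x.snd := by simp [rowOp]
@[simp] lemma colOp_fst (M : G →L[ℂ] E) (N : G →L[ℂ] F) (x : G) :
    (colOp M N x).fst = M x := by simp [colOp]
@[simp] lemma colOp_snd (M : G →L[ℂ] E) (N : G →L[ℂ] F) (x : G) :
    (colOp M N x).snd = N x := by simp [colOp]
@[simp] lemma blkOp_fst (M : E →L[ℂ] G) (N : F →L[ℂ] G) (Q : E →L[ℂ] H) (R : F →L[ℂ] H)
    (x : WithLp 2 (E × F)) : (blkOp M N Q R x).fst = M x.fst + N x.snd := by simp [blkOp]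
@[simp] lemma blkOp_snd (M : E →L[ℂ] G) (N : F →L[ℂ] G) (Q : E →L[ℂ] H) (R : F →L[ℂ] H)
    (x : WithLp 2 (E × F)) : (blkOp M N Q R x).snd = Q x.fst + R x.snd := by simp [blkOp]

lemma adjoint_rowOp (M : E →L[ℂ] G) (N : F →L[ℂ] G) :
    adjoint (rowOp M N) = colOp (adjoint M) (adjoint N) := by
  rw [rowOp, colOp, map_add, adjoint_comp, adjoint_comp, adjoint_P1, adjoint_P2]
lemma adjoint_colOp (M : G →L[ℂ] E) (N : G →L[ℂ] F) :
    adjoint (colOp M N) = rowOp (adjoint M) (adjoint N) := by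
  rw [rowOp, colOp, map_add, adjoint_comp, adjoint_comp, adjoint_J1, adjoint_J2]
lemma adjoint_blkOp (M : E →L[ℂ] G) (N : F →L[ℂ] G) (Q : E →L[ℂ] H) (R : F →L[ℂ] H) :
    adjoint (blkOp M N Q R) = blkOp (adjoint M) (adjoint Q) (adjoint N) (adjoint R) := by
  rw [blkOp, adjoint_colOp, adjoint_rowOp, adjoint_rowOp, blkOp]
  ext x; refine ext_wlp ?_ ?_ <;> simp

lemma rowOp_comp_colOp (M : E →L[ℂ] G) (N : F →L[ℂ] G) (M' : G' →L[ℂ] E) (N' : G' →L[ℂ] F) :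
    rowOp M N ∘L colOp M' N' = M ∘L M' + N ∘L N' := by
  ext x; simp
lemma colOp_comp_rowOp (M : G →L[ℂ] E) (N : G →L[ℂ] F) (M' : G' →L[ℂ] G) (N' : H' →L[ℂ] G) :
    colOp M N ∘L rowOp M' N' = blkOp (M ∘L M') (M ∘L N') (N ∘L M') (N ∘L N') := by
  ext x; refine ext_wlp ?_ ?_ <;> simp
lemma colOp_comp (M : G →L[ℂ] E) (N : G →L[ℂ] F) (T : G' →L[ℂ] G) :
    colOp M N ∘L T = colOp (M ∘L T) (N ∘L T) := by
  ext x; exact ext_wlp (by simp) (by simp)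
lemma comp_rowOp (M : E →L[ℂ] G) (N : F →L[ℂ] G) (T : G →L[ℂ] G') :
    T ∘L rowOp M N = rowOp (T ∘L M) (T ∘L N) := by
  ext x; simp
lemma blkOp_comp_colOp (M : E →L[ℂ] G) (N : F →L[ℂ] G) (Q : E →L[ℂ] H) (R : F →L[ℂ] H)
    (M' : G' →L[ℂ] E) (N' : G' →L[ℂ] F) :
    blkOp M N Q R ∘L colOp M' N' = colOp (M ∘L M' + N ∘L N') (Q ∘L M' + R ∘L N') := by
  ext x; exact ext_wlp (by simp) (by simp)
lemma rowOp_comp_blkOp (M : E →L[ℂ] G) (N : F →L[ℂ] G)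
    (M' : G' →L[ℂ] E) (N' : H' →L[ℂ] E) (Q' : G' →L[ℂ] F) (R' : H' →L[ℂ] F) :
    rowOp M N ∘L blkOp M' N' Q' R' = rowOp (M ∘L M' + N ∘L Q') (M ∘L N' + N ∘L R') := by
  ext x; simp; abel
lemma blkOp_comp_blkOp (M : E →L[ℂ] G) (N : F →L[ℂ] G) (Q : E →L[ℂ] H) (R : F →L[ℂ] H)
    (M' : G' →L[ℂ] E) (N' : H' →L[ℂ] E) (Q' : G' →L[ℂ] F) (R' : H' →L[ℂ] F) :
    blkOp M N Q R ∘L blkOp M' N' Q' R' =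
      blkOp (M ∘L M' + N ∘L Q') (M ∘L N' + N ∘L R') (Q ∘L M' + R ∘L Q') (Q ∘L N' + R ∘L R') := by
  ext x; refine ext_wlp ?_ ?_ <;> simp <;> abel

lemma one_eq_blkOp : (1 : WithLp 2 (E × F) →L[ℂ] WithLp 2 (E × F)) = blkOp 1 0 0 1 := by
  ext x; exact ext_wlp (by simp) (by simp)

lemma blkOp_sub (M N Q R : _) (M' : E →L[ℂ] G) (N' : F →L[ℂ] G) (Q' : E →L[ℂ] H) (R' : F →L[ℂ] H) :
    blkOp M N Q R - blkOp M' N' Q' R' = blkOp (M - M') (N - N') (Q - Q') (R - R') := by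
  ext x; refine ext_wlp ?_ ?_ <;> simp <;> abel

lemma blkOp_congr {M M' : E →L[ℂ] G} {N N' : F →L[ℂ] G} {Q Q' : E →L[ℂ] H} {R R' : F →L[ℂ] H}
    (h1 : M = M') (h2 : N = N') (h3 : Q = Q') (h4 : R = R') :
    blkOp M N Q R = blkOp M' N' Q' R' := by rw [h1, h2, h3, h4]

lemma contraction (B : E →L[ℂ] G) (D : E →L[ℂ] H)
    (h : adjoint B ∘L B + adjoint D ∘L D = 1) (x : E) : ‖D x‖ ≤ ‖x‖ := by
  have e0 : (adjoint B ∘L B + adjoint D ∘L D) x = x := by rw [h]; simp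
  have e1 : (inner ℂ x x : ℂ) = inner ℂ (B x) (B x) + inner ℂ (D x) (D x) := by
    calc (inner ℂ x x : ℂ) = inner ℂ ((adjoint B ∘L B + adjoint D ∘L D) x) x := by rw [e0]
    _ = inner ℂ (B x) (B x) + inner ℂ (D x) (D x) := by
        simp [ContinuousLinearMap.add_apply, inner_add_left,
          ContinuousLinearMap.adjoint_inner_left]
  rw [inner_self_eq_norm_sq_to_K, inner_self_eq_norm_sq_to_K, inner_self_eq_norm_sq_to_K] at e1
  have h2 : ‖x‖ ^ 2 = ‖B x‖ ^ 2 + ‖D x‖ ^ 2 := by exact_mod_cast e1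
  have h3 : ‖D x‖ ^ 2 ≤ ‖x‖ ^ 2 := by nlinarith [sq_nonneg ‖B x‖]
  have h4 := Real.sqrt_le_sqrt h3
  rwa [Real.sqrt_sq (norm_nonneg _), Real.sqrt_sq (norm_nonneg _)] at h4

lemma norm_le_one_of_colligation (B : E →L[ℂ] G) (D : E →L[ℂ] H)
    (h : adjoint B ∘L B + adjoint D ∘L D = 1) : ‖D‖ ≤ 1 :=
  D.opNorm_le_bound zero_le_one (fun x => by simpa using contraction B D h x)

lemma ring_inverse_eq {R : Type*} [Ring R] {a b : R} (h1 : a * b = 1) (h2 : b * a = 1) :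
    Ring.inverse a = b := by
  have hu : IsUnit a := ⟨⟨a, b, h1, h2⟩, rfl⟩
  calc Ring.inverse a = Ring.inverse a * (a * b) := by rw [h1, mul_one]
  _ = (Ring.inverse a * a) * b := by rw [mul_assoc]
  _ = b := by rw [Ring.inverse_mul_cancel a hu, one_mul]


variable {K₁ K₂ : Type*} [NormedAddCommGroup K₁] [InnerProductSpace ℂ K₁] [CompleteSpace K₁]
  [NormedAddCommGroup K₂] [InnerProductSpace ℂ K₂] [CompleteSpace K₂]

lemma one_comp' (T : E →L[ℂ] G) : (1 : G →L[ℂ] G) ∘L T = T := by ext x; simp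
lemma comp_one' (T : E →L[ℂ] G) : T ∘L (1 : E →L[ℂ] E) = T := by ext x; simp

lemma adjoint_zero' : adjoint (0 : E →L[ℂ] G) = 0 := by
  symm; rw [ContinuousLinearMap.eq_adjoint_iff]; intro x y; simp

lemma blkOp_add (M M' : E →L[ℂ] G) (N N' : F →L[ℂ] G) (Q Q' : E →L[ℂ] H) (R R' : F →L[ℂ] H) :
    blkOp M N Q R + blkOp M' N' Q' R' = blkOp (M + M') (N + N') (Q + Q') (R + R') := by
  ext x; refine ext_wlp ?_ ?_ <;> simp <;> abel

set_option maxHeartbeats 2000000 in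
lemma key_unitary
    (A₁ : ℂ →L[ℂ] ℂ) (B₁ : K₁ →L[ℂ] ℂ) (C₁ : ℂ →L[ℂ] K₁) (D₁ : K₁ →L[ℂ] K₁)
    (A₂ : ℂ →L[ℂ] ℂ) (B₂ : K₂ →L[ℂ] ℂ) (C₂ : ℂ →L[ℂ] K₂) (D₂ : K₂ →L[ℂ] K₂)
    (hU₁ : IsUnitaryColl A₁ B₁ C₁ D₁) (hU₂ : IsUnitaryColl A₂ B₂ C₂ D₂) :
    IsUnitaryColl (A₁ ∘L A₂) (rowOp B₁ (A₁ ∘L B₂)) (colOp (C₁ ∘L A₂) C₂)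
      (blkOp D₁ (C₁ ∘L B₂) 0 D₂) := by
  obtain ⟨q11, q12, q13, q14, q15, q16, q17, q18⟩ := hU₁
  obtain ⟨r11, r12, r13, r14, r15, r16, r17, r18⟩ := hU₂
  have p11 : ∀ y : ℂ, adjoint A₁ (A₁ y) + adjoint C₁ (C₁ y) = y := fun y => by
    simpa using ContinuousLinearMap.ext_iff.mp q11 y
  have p12 : ∀ y, adjoint A₁ (B₁ y) + adjoint C₁ (D₁ y) = 0 := fun y => by
    simpa using ContinuousLinearMap.ext_iff.mp q12 y
  have p15 : ∀ y : ℂ, A₁ (adjoint A₁ y) + B₁ (adjoint B₁ y) = y := fun y => by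
    simpa using ContinuousLinearMap.ext_iff.mp q15 y
  have p16 : ∀ y, A₁ (adjoint C₁ y) + B₁ (adjoint D₁ y) = 0 := fun y => by
    simpa using ContinuousLinearMap.ext_iff.mp q16 y
  have s11 : ∀ y : ℂ, adjoint A₂ (A₂ y) + adjoint C₂ (C₂ y) = y := fun y => by
    simpa using ContinuousLinearMap.ext_iff.mp r11 y
  have s12 : ∀ y, adjoint A₂ (B₂ y) + adjoint C₂ (D₂ y) = 0 := fun y => by
    simpa using ContinuousLinearMap.ext_iff.mp r12 y
  have s15 : ∀ y : ℂ, A₂ (adjoint A₂ y) + B₂ (adjoint B₂ y) = y := fun y => by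
    simpa using ContinuousLinearMap.ext_iff.mp r15 y
  have s16 : ∀ y, A₂ (adjoint C₂ y) + B₂ (adjoint D₂ y) = 0 := fun y => by
    simpa using ContinuousLinearMap.ext_iff.mp r16 y
  have e1 : adjoint (A₁ ∘L A₂) ∘L (A₁ ∘L A₂)
      + adjoint (colOp (C₁ ∘L A₂) C₂) ∘L colOp (C₁ ∘L A₂) C₂ = 1 := by
    rw [adjoint_colOp, rowOp_comp_colOp]
    refine ContinuousLinearMap.ext fun x => ?_
    simp only [ContinuousLinearMap.add_apply, ContinuousLinearMap.comp_apply,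
      ContinuousLinearMap.adjoint_comp, ContinuousLinearMap.one_apply]
    have h2 : adjoint A₂ (adjoint A₁ (A₁ (A₂ x))) + adjoint A₂ (adjoint C₁ (C₁ (A₂ x)))
        = adjoint A₂ (A₂ x) := by rw [← map_add]; exact congrArg _ (p11 (A₂ x))
    linear_combination h2 + s11 x
  have e2 : adjoint (A₁ ∘L A₂) ∘L rowOp B₁ (A₁ ∘L B₂)
      + adjoint (colOp (C₁ ∘L A₂) C₂) ∘L blkOp D₁ (C₁ ∘L B₂) 0 D₂ = 0 := by
    rw [adjoint_colOp]
    refine ContinuousLinearMap.ext fun x => ?_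
    simp only [ContinuousLinearMap.add_apply, ContinuousLinearMap.comp_apply,
      ContinuousLinearMap.adjoint_comp, ContinuousLinearMap.zero_apply, rowOp_apply,
      blkOp_fst, blkOp_snd, map_add, ContinuousLinearMap.zero_apply, zero_add]
    have t1 : adjoint A₂ (adjoint A₁ (B₁ x.fst)) + adjoint A₂ (adjoint C₁ (D₁ x.fst)) = 0 := by
      rw [← map_add, p12, map_zero]
    have t2 : adjoint A₂ (adjoint A₁ (A₁ (B₂ x.snd))) + adjoint A₂ (adjoint C₁ (C₁ (B₂ x.snd)))
        = adjoint A₂ (B₂ x.snd) := by rw [← map_add]; exact congrArg _ (p11 (B₂ x.snd))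
    linear_combination t1 + t2 + s12 x.snd
  have e3 : adjoint (rowOp B₁ (A₁ ∘L B₂)) ∘L (A₁ ∘L A₂)
      + adjoint (blkOp D₁ (C₁ ∘L B₂) 0 D₂) ∘L colOp (C₁ ∘L A₂) C₂ = 0 := by
    have := congrArg adjoint e2
    simpa only [map_add, adjoint_comp, adjoint_adjoint, map_zero] using this
  have e4 : adjoint (rowOp B₁ (A₁ ∘L B₂)) ∘L rowOp B₁ (A₁ ∘L B₂)
      + adjoint (blkOp D₁ (C₁ ∘L B₂) 0 D₂) ∘L blkOp D₁ (C₁ ∘L B₂) 0 D₂ = 1 := by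
    rw [adjoint_rowOp, adjoint_blkOp, colOp_comp_rowOp, blkOp_comp_blkOp, blkOp_add,
      one_eq_blkOp]
    refine blkOp_congr ?_ ?_ ?_ ?_
    · rw [adjoint_zero', zero_comp, add_zero, q14]
    · rw [adjoint_zero', zero_comp, add_zero, ← ContinuousLinearMap.comp_assoc,
        ← ContinuousLinearMap.comp_assoc, ← add_comp, q13, zero_comp]
    · rw [comp_zero, add_zero, adjoint_comp, adjoint_comp, ContinuousLinearMap.comp_assoc,
        ContinuousLinearMap.comp_assoc, ← comp_add, q12, comp_zero]
    · rw [adjoint_comp, adjoint_comp]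
      have h : (adjoint B₂ ∘L adjoint A₁) ∘L (A₁ ∘L B₂)
          + (adjoint B₂ ∘L adjoint C₁) ∘L (C₁ ∘L B₂)
          = adjoint B₂ ∘L ((adjoint A₁ ∘L A₁ + adjoint C₁ ∘L C₁) ∘L B₂) := by
        simp only [comp_add, add_comp, ContinuousLinearMap.comp_assoc]
      rw [← add_assoc, h, q11, one_comp', r14]
  have e5 : (A₁ ∘L A₂) ∘L adjoint (A₁ ∘L A₂)
      + rowOp B₁ (A₁ ∘L B₂) ∘L adjoint (rowOp B₁ (A₁ ∘L B₂)) = 1 := by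
    rw [adjoint_rowOp, rowOp_comp_colOp]
    refine ContinuousLinearMap.ext fun x => ?_
    simp only [ContinuousLinearMap.add_apply, ContinuousLinearMap.comp_apply,
      ContinuousLinearMap.adjoint_comp, ContinuousLinearMap.one_apply]
    have t1 : A₁ (A₂ (adjoint A₂ (adjoint A₁ x))) + A₁ (B₂ (adjoint B₂ (adjoint A₁ x)))
        = A₁ (adjoint A₁ x) := by rw [← map_add]; exact congrArg _ (s15 (adjoint A₁ x))
    linear_combination t1 + p15 x
  have e6 : (A₁ ∘L A₂) ∘L adjoint (colOp (C₁ ∘L A₂) C₂)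
      + rowOp B₁ (A₁ ∘L B₂) ∘L adjoint (blkOp D₁ (C₁ ∘L B₂) 0 D₂) = 0 := by
    rw [adjoint_colOp, adjoint_blkOp]
    refine ContinuousLinearMap.ext fun x => ?_
    simp only [ContinuousLinearMap.add_apply, ContinuousLinearMap.comp_apply,
      ContinuousLinearMap.adjoint_comp, ContinuousLinearMap.zero_apply, rowOp_apply,
      blkOp_fst, blkOp_snd, map_add, map_zero, add_zero, zero_add]
    have u1 : A₁ (A₂ (adjoint A₂ (adjoint C₁ x.fst))) + A₁ (B₂ (adjoint B₂ (adjoint C₁ x.fst)))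
        = A₁ (adjoint C₁ x.fst) := by rw [← map_add]; exact congrArg _ (s15 (adjoint C₁ x.fst))
    have u3 : A₁ (A₂ (adjoint C₂ x.snd)) + A₁ (B₂ (adjoint D₂ x.snd)) = 0 := by
      rw [← map_add, s16, map_zero]
    linear_combination u1 + u3 + p16 x.fst
  have e7 : colOp (C₁ ∘L A₂) C₂ ∘L adjoint (A₁ ∘L A₂)
      + blkOp D₁ (C₁ ∘L B₂) 0 D₂ ∘L adjoint (rowOp B₁ (A₁ ∘L B₂)) = 0 := by
    have := congrArg adjoint e6
    simpa only [map_add, adjoint_comp, adjoint_adjoint, map_zero] using this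
  have e8 : colOp (C₁ ∘L A₂) C₂ ∘L adjoint (colOp (C₁ ∘L A₂) C₂)
      + blkOp D₁ (C₁ ∘L B₂) 0 D₂ ∘L adjoint (blkOp D₁ (C₁ ∘L B₂) 0 D₂) = 1 := by
    rw [adjoint_colOp, adjoint_blkOp, colOp_comp_rowOp, blkOp_comp_blkOp, blkOp_add,
      one_eq_blkOp]
    refine blkOp_congr ?_ ?_ ?_ ?_
    · simp only [adjoint_comp]
      have hre : (C₁ ∘L A₂) ∘L (adjoint A₂ ∘L adjoint C₁)
          + (D₁ ∘L adjoint D₁ + (C₁ ∘L B₂) ∘L (adjoint B₂ ∘L adjoint C₁))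
          = ((C₁ ∘L A₂) ∘L (adjoint A₂ ∘L adjoint C₁)
            + (C₁ ∘L B₂) ∘L (adjoint B₂ ∘L adjoint C₁)) + D₁ ∘L adjoint D₁ := by abel
      have h : (C₁ ∘L A₂) ∘L (adjoint A₂ ∘L adjoint C₁)
          + (C₁ ∘L B₂) ∘L (adjoint B₂ ∘L adjoint C₁)
          = C₁ ∘L ((A₂ ∘L adjoint A₂ + B₂ ∘L adjoint B₂) ∘L adjoint C₁) := by
        simp only [comp_add, add_comp, ContinuousLinearMap.comp_assoc]
      rw [hre, h, r15, one_comp', q18]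
    · rw [adjoint_zero', comp_zero, zero_add, ContinuousLinearMap.comp_assoc,
        ContinuousLinearMap.comp_assoc, ← comp_add, r16, comp_zero]
    · rw [zero_comp, zero_add, adjoint_comp, adjoint_comp, ← ContinuousLinearMap.comp_assoc,
        ← ContinuousLinearMap.comp_assoc, ← add_comp, r17, zero_comp]
    · rw [adjoint_zero', comp_zero, zero_add, r18]
  exact ⟨e1, e2, e3, e4, e5, e6, e7, e8⟩


lemma norm_blk_le (Y₁ : E →L[ℂ] E) (Y₂ : F →L[ℂ] F) :
    ‖blkOp Y₁ 0 0 Y₂‖ ≤ max ‖Y₁‖ ‖Y₂‖ := by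
  set a : ℝ := max ‖Y₁‖ ‖Y₂‖ with ha
  have ha0 : 0 ≤ a := (norm_nonneg Y₁).trans (le_max_left _ _)
  refine opNorm_le_bound _ ha0 (fun x => ?_)
  have hsq := WithLp.prod_norm_sq_eq_of_L2 (blkOp Y₁ 0 0 Y₂ x)
  have hfst : (blkOp Y₁ 0 0 Y₂ x).fst = Y₁ x.fst := by simp
  have hsnd : (blkOp Y₁ 0 0 Y₂ x).snd = Y₂ x.snd := by simp
  rw [hfst, hsnd] at hsq
  have hsqx := WithLp.prod_norm_sq_eq_of_L2 x
  have b1 : ‖Y₁ x.fst‖ ≤ a * ‖x.fst‖ :=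
    le_trans (Y₁.le_opNorm _) (mul_le_mul_of_nonneg_right (le_max_left _ _) (norm_nonneg _))
  have b2 : ‖Y₂ x.snd‖ ≤ a * ‖x.snd‖ :=
    le_trans (Y₂.le_opNorm _) (mul_le_mul_of_nonneg_right (le_max_right _ _) (norm_nonneg _))
  have hs : ‖blkOp Y₁ 0 0 Y₂ x‖ ^ 2 ≤ (a * ‖x‖) ^ 2 := by
    rw [hsq, mul_pow, hsqx]
    nlinarith [norm_nonneg (Y₁ x.fst), norm_nonneg (Y₂ x.snd), norm_nonneg x.fst,
      norm_nonneg x.snd]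
  have h4 := Real.sqrt_le_sqrt hs
  rwa [Real.sqrt_sq (norm_nonneg _), Real.sqrt_sq (mul_nonneg ha0 (norm_nonneg _))] at h4

lemma norm_blk_lt (Y₁ : E →L[ℂ] E) (Y₂ : F →L[ℂ] F) (h1 : ‖Y₁‖ < 1) (h2 : ‖Y₂‖ < 1) :
    ‖blkOp Y₁ 0 0 Y₂‖ < 1 :=
  lt_of_le_of_lt (norm_blk_le Y₁ Y₂) (max_lt h1 h2)

lemma cancel_left {a b : E →L[ℂ] E} (h : a ∘L b = 1) (T : G →L[ℂ] E) :
    a ∘L (b ∘L T) = T := by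
  rw [← ContinuousLinearMap.comp_assoc, h, one_comp']

lemma scalar_apply (T : ℂ →L[ℂ] E) (c : ℂ) : T c = c • T 1 := by
  conv_lhs => rw [show c = c • (1 : ℂ) by simp]
  rw [map_smul]

set_option maxHeartbeats 2000000 in
lemma key_product
    (A₁ : ℂ →L[ℂ] ℂ) (B₁ : K₁ →L[ℂ] ℂ) (C₁ : ℂ →L[ℂ] K₁) (D₁ : K₁ →L[ℂ] K₁)
    (A₂ : ℂ →L[ℂ] ℂ) (B₂ : K₂ →L[ℂ] ℂ) (C₂ : ℂ →L[ℂ] K₂) (D₂ : K₂ →L[ℂ] K₂)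
    (Y₁ : K₁ →L[ℂ] K₁) (Y₂ : K₂ →L[ℂ] K₂)
    (hY₁ : ‖Y₁‖ < 1) (hY₂ : ‖Y₂‖ < 1) (hD₁ : ‖D₁‖ ≤ 1) (hD₂ : ‖D₂‖ ≤ 1)
    (hDb : ‖blkOp D₁ (C₁ ∘L B₂) 0 D₂‖ ≤ 1) :
    (A₁ 1 + B₁ ((Y₁ * Ring.inverse (1 - D₁ * Y₁)) (C₁ 1)))
      * (A₂ 1 + B₂ ((Y₂ * Ring.inverse (1 - D₂ * Y₂)) (C₂ 1)))
    = (A₁ ∘L A₂) 1 + (rowOp B₁ (A₁ ∘L B₂))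
        ((blkOp Y₁ 0 0 Y₂ * Ring.inverse (1 - blkOp D₁ (C₁ ∘L B₂) 0 D₂ * blkOp Y₁ 0 0 Y₂))
          ((colOp (C₁ ∘L A₂) C₂) 1)) := by
  have hn1 : ‖D₁ * Y₁‖ < 1 :=
    lt_of_le_of_lt (norm_mul_le _ _) (lt_of_le_of_lt
      (mul_le_of_le_one_left (norm_nonneg _) hD₁) hY₁)
  have hn2 : ‖D₂ * Y₂‖ < 1 :=
    lt_of_le_of_lt (norm_mul_le _ _) (lt_of_le_of_lt
      (mul_le_of_le_one_left (norm_nonneg _) hD₂) hY₂)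
  have hnb : ‖blkOp D₁ (C₁ ∘L B₂) 0 D₂ * blkOp Y₁ 0 0 Y₂‖ < 1 :=
    lt_of_le_of_lt (norm_mul_le _ _) (lt_of_le_of_lt
      (mul_le_of_le_one_left (norm_nonneg _) hDb) (norm_blk_lt Y₁ Y₂ hY₁ hY₂))
  have hu1 : IsUnit (1 - D₁ * Y₁) := isUnit_one_sub_of_norm_lt_one hn1
  have hu2 : IsUnit (1 - D₂ * Y₂) := isUnit_one_sub_of_norm_lt_one hn2
  set N₁ : K₁ →L[ℂ] K₁ := Ring.inverse (1 - D₁ * Y₁) with hN₁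
  set N₂ : K₂ →L[ℂ] K₂ := Ring.inverse (1 - D₂ * Y₂) with hN₂
  have c1 : (1 - D₁ * Y₁) ∘L N₁ = 1 := Ring.mul_inverse_cancel _ hu1
  have c1' : N₁ ∘L (1 - D₁ * Y₁) = 1 := Ring.inverse_mul_cancel _ hu1
  have c2 : (1 - D₂ * Y₂) ∘L N₂ = 1 := Ring.mul_inverse_cancel _ hu2
  have c2' : N₂ ∘L (1 - D₂ * Y₂) = 1 := Ring.inverse_mul_cancel _ hu2
  set M : WithLp 2 (K₁ × K₂) →L[ℂ] WithLp 2 (K₁ × K₂) :=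
    blkOp N₁ (N₁ ∘L (C₁ ∘L (B₂ ∘L (Y₂ ∘L N₂)))) 0 N₂ with hM
  have honesub : (1 : WithLp 2 (K₁ × K₂) →L[ℂ] WithLp 2 (K₁ × K₂))
      - blkOp D₁ (C₁ ∘L B₂) 0 D₂ * blkOp Y₁ 0 0 Y₂
      = blkOp (1 - D₁ * Y₁) (-(C₁ ∘L (B₂ ∘L Y₂))) 0 (1 - D₂ * Y₂) := by
    have hmul : blkOp D₁ (C₁ ∘L B₂) 0 D₂ * blkOp Y₁ 0 0 Y₂
        = blkOp (D₁ * Y₁) (C₁ ∘L (B₂ ∘L Y₂)) 0 (D₂ * Y₂) := by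
      rw [ContinuousLinearMap.mul_def, blkOp_comp_blkOp]
      refine blkOp_congr ?_ ?_ ?_ ?_ <;>
        simp [ContinuousLinearMap.mul_def, ContinuousLinearMap.comp_assoc]
    rw [hmul]
    conv_lhs => rw [one_eq_blkOp]
    rw [blkOp_sub]
    refine blkOp_congr rfl ?_ (by simp) rfl
    rw [zero_sub]
  have hM1 : ((1 : WithLp 2 (K₁ × K₂) →L[ℂ] WithLp 2 (K₁ × K₂))
      - blkOp D₁ (C₁ ∘L B₂) 0 D₂ * blkOp Y₁ 0 0 Y₂) * M = 1 := by
    rw [honesub, ContinuousLinearMap.mul_def, hM, blkOp_comp_blkOp]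
    conv_rhs => rw [one_eq_blkOp]
    refine blkOp_congr ?_ ?_ ?_ ?_
    · rw [comp_zero, add_zero]; exact c1
    · rw [cancel_left c1, neg_comp]
      simp only [ContinuousLinearMap.comp_assoc]
      exact add_neg_cancel _
    · simp
    · rw [zero_comp, zero_add]; exact c2
  have hM2 : M * ((1 : WithLp 2 (K₁ × K₂) →L[ℂ] WithLp 2 (K₁ × K₂))
      - blkOp D₁ (C₁ ∘L B₂) 0 D₂ * blkOp Y₁ 0 0 Y₂) = 1 := by
    rw [honesub, ContinuousLinearMap.mul_def, hM, blkOp_comp_blkOp]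
    conv_rhs => rw [one_eq_blkOp]
    refine blkOp_congr ?_ ?_ ?_ ?_
    · rw [comp_zero, add_zero]; exact c1'
    · have h2 : (N₁ ∘L (C₁ ∘L (B₂ ∘L (Y₂ ∘L N₂)))) ∘L (1 - D₂ * Y₂)
          = N₁ ∘L (C₁ ∘L (B₂ ∘L Y₂)) := by
        rw [ContinuousLinearMap.comp_assoc, ContinuousLinearMap.comp_assoc,
          ContinuousLinearMap.comp_assoc, ContinuousLinearMap.comp_assoc, c2', comp_one']
      rw [h2, comp_neg, neg_add_cancel]
    · simp
    · rw [zero_comp, zero_add]; exact c2'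
  have hMinv : Ring.inverse ((1 : WithLp 2 (K₁ × K₂) →L[ℂ] WithLp 2 (K₁ × K₂))
      - blkOp D₁ (C₁ ∘L B₂) 0 D₂ * blkOp Y₁ 0 0 Y₂) = M := ring_inverse_eq hM1 hM2
  rw [hMinv, hM]
  simp only [ContinuousLinearMap.mul_apply, ContinuousLinearMap.comp_apply, rowOp_apply,
    blkOp_fst, blkOp_snd, colOp_fst, colOp_snd, ContinuousLinearMap.zero_apply, add_zero,
    zero_add, map_add]
  rw [scalar_apply C₁ (A₂ 1), scalar_apply C₁ (B₂ (Y₂ (N₂ (C₂ 1)))),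
    scalar_apply A₁ (A₂ 1), scalar_apply A₁ (B₂ (Y₂ (N₂ (C₂ 1))))]
  simp only [map_add, map_smul, smul_eq_mul]
  ring

end ProdColl

open ProdColl in
set_option maxHeartbeats 2000000 in
/-- If `f` and `g` on the tetrablock admit unitary colligation realizations
(`V₁ = [[A₁,B₁],[C₁,D₁]]` on `ℂ ⊕ 𝔥'` with `X₁(z)`, `V₂ = [[A₂,B₂],[C₂,D₂]]` on `ℂ ⊕ 𝔥''`
with `X₂(z)`), then the block operator
`V = [[A₁A₂, (B₁, A₁B₂)], [(C₁A₂; C₂), [[D₁, C₁B₂],[0, D₂]]]]` is a unitary colligation on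
`ℂ ⊕ (𝔥' ⊕₂ 𝔥'')` realizing the pointwise product `fg` with `X = X₁ ⊕ X₂`. -/
theorem product_unitary_colligation
    {K₁ K₂ : Type} [NormedAddCommGroup K₁] [InnerProductSpace ℂ K₁] [CompleteSpace K₁]
    [NormedAddCommGroup K₂] [InnerProductSpace ℂ K₂] [CompleteSpace K₂]
    (f g : (ℂ × ℂ × ℂ) → ℂ)
    (A₁ : ℂ →L[ℂ] ℂ) (B₁ : K₁ →L[ℂ] ℂ) (C₁ : ℂ →L[ℂ] K₁) (D₁ : K₁ →L[ℂ] K₁)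
    (A₂ : ℂ →L[ℂ] ℂ) (B₂ : K₂ →L[ℂ] ℂ) (C₂ : ℂ →L[ℂ] K₂) (D₂ : K₂ →L[ℂ] K₂)
    (X₁ : (ℂ × ℂ × ℂ) → (K₁ →L[ℂ] K₁)) (X₂ : (ℂ × ℂ × ℂ) → (K₂ →L[ℂ] K₂))
    (hU₁ : IsUnitaryColl A₁ B₁ C₁ D₁) (hU₂ : IsUnitaryColl A₂ B₂ C₂ D₂)
    (hX₁ : ∀ z ∈ tetrablock, ‖X₁ z‖ < 1) (hX₂ : ∀ z ∈ tetrablock, ‖X₂ z‖ < 1)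
    (hf : ∀ z ∈ tetrablock,
      f z = A₁ 1 + B₁ ((X₁ z * Ring.inverse (1 - D₁ * X₁ z)) (C₁ 1)))
    (hg : ∀ z ∈ tetrablock,
      g z = A₂ 1 + B₂ ((X₂ z * Ring.inverse (1 - D₂ * X₂ z)) (C₂ 1))) :
    let e : WithLp 2 (K₁ × K₂) ≃L[ℂ] K₁ × K₂ := WithLp.prodContinuousLinearEquiv 2 ℂ K₁ K₂
    let A : ℂ →L[ℂ] ℂ := A₁ ∘L A₂
    let B : WithLp 2 (K₁ × K₂) →L[ℂ] ℂ :=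
      (B₁.coprod (A₁ ∘L B₂)) ∘L (e : WithLp 2 (K₁ × K₂) →L[ℂ] K₁ × K₂)
    let C : ℂ →L[ℂ] WithLp 2 (K₁ × K₂) :=
      (e.symm : (K₁ × K₂) →L[ℂ] WithLp 2 (K₁ × K₂)) ∘L ((C₁ ∘L A₂).prod C₂)
    let D : WithLp 2 (K₁ × K₂) →L[ℂ] WithLp 2 (K₁ × K₂) :=
      (e.symm : (K₁ × K₂) →L[ℂ] WithLp 2 (K₁ × K₂)) ∘L
        (((D₁.coprod (C₁ ∘L B₂)).prod ((0 : K₁ →L[ℂ] K₂).coprod D₂)) ∘L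
          (e : WithLp 2 (K₁ × K₂) →L[ℂ] K₁ × K₂))
    let X : (ℂ × ℂ × ℂ) → (WithLp 2 (K₁ × K₂) →L[ℂ] WithLp 2 (K₁ × K₂)) := fun z =>
      (e.symm : (K₁ × K₂) →L[ℂ] WithLp 2 (K₁ × K₂)) ∘L
        (((X₁ z ∘L ContinuousLinearMap.fst ℂ K₁ K₂).prod
            (X₂ z ∘L ContinuousLinearMap.snd ℂ K₁ K₂)) ∘L
          (e : WithLp 2 (K₁ × K₂) →L[ℂ] K₁ × K₂))
    IsUnitaryColl A B C D ∧
      (∀ z ∈ tetrablock, ‖X z‖ < 1) ∧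
      ∀ z ∈ tetrablock,
        f z * g z = A 1 + B ((X z * Ring.inverse (1 - D * X z)) (C 1)) := by
  intro e A B C D X
  have hA0 : A = A₁ ∘L A₂ := rfl
  have hB : B = rowOp B₁ (A₁ ∘L B₂) := by
    ext x
    show (B₁.coprod (A₁ ∘L B₂)) ((WithLp.prodContinuousLinearEquiv 2 ℂ K₁ K₂) x) = _
    simp [WithLp.ofLp_fst, WithLp.ofLp_snd]
  have hC : C = colOp (C₁ ∘L A₂) C₂ := by
    refine ContinuousLinearMap.ext fun x => ?_
    refine ProdColl.ext_wlp ?_ ?_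
    · show ((((C₁ ∘L A₂).prod C₂) x : K₁ × K₂)).1 = _
      simp
    · show ((((C₁ ∘L A₂).prod C₂) x : K₁ × K₂)).2 = _
      simp
  have hD : D = blkOp D₁ (C₁ ∘L B₂) 0 D₂ := by
    refine ContinuousLinearMap.ext fun x => ?_
    refine ProdColl.ext_wlp ?_ ?_
    · show ((((D₁.coprod (C₁ ∘L B₂)).prod ((0 : K₁ →L[ℂ] K₂).coprod D₂))
        ((WithLp.prodContinuousLinearEquiv 2 ℂ K₁ K₂) x) : K₁ × K₂)).1 = _
      simp [WithLp.ofLp_fst, WithLp.ofLp_snd]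
    · show ((((D₁.coprod (C₁ ∘L B₂)).prod ((0 : K₁ →L[ℂ] K₂).coprod D₂))
        ((WithLp.prodContinuousLinearEquiv 2 ℂ K₁ K₂) x) : K₁ × K₂)).2 = _
      simp [WithLp.ofLp_fst, WithLp.ofLp_snd]
  have hX : ∀ z, X z = blkOp (X₁ z) 0 0 (X₂ z) := by
    intro z
    refine ContinuousLinearMap.ext fun x => ?_
    refine ProdColl.ext_wlp ?_ ?_
    · show ((((X₁ z ∘L ContinuousLinearMap.fst ℂ K₁ K₂).prod
          (X₂ z ∘L ContinuousLinearMap.snd ℂ K₁ K₂))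
        ((WithLp.prodContinuousLinearEquiv 2 ℂ K₁ K₂) x) : K₁ × K₂)).1 = _
      simp [WithLp.ofLp_fst, WithLp.ofLp_snd]
    · show ((((X₁ z ∘L ContinuousLinearMap.fst ℂ K₁ K₂).prod
          (X₂ z ∘L ContinuousLinearMap.snd ℂ K₁ K₂))
        ((WithLp.prodContinuousLinearEquiv 2 ℂ K₁ K₂) x) : K₁ × K₂)).2 = _
      simp [WithLp.ofLp_fst, WithLp.ofLp_snd]
  have hKU := key_unitary A₁ B₁ C₁ D₁ A₂ B₂ C₂ D₂ hU₁ hU₂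
  have hU : IsUnitaryColl A B C D := by
    rw [hA0, hB, hC, hD]; exact hKU
  have hD1 : ‖D₁‖ ≤ 1 := norm_le_one_of_colligation B₁ D₁ hU₁.2.2.2.1
  have hD2 : ‖D₂‖ ≤ 1 := norm_le_one_of_colligation B₂ D₂ hU₂.2.2.2.1
  have hDb : ‖blkOp D₁ (C₁ ∘L B₂) 0 D₂‖ ≤ 1 :=
    norm_le_one_of_colligation _ _ hKU.2.2.2.1
  refine ⟨hU, ?_, ?_⟩
  · intro z hz
    rw [hX z]
    exact norm_blk_lt _ _ (hX₁ z hz) (hX₂ z hz)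
  · intro z hz
    rw [hf z hz, hg z hz, hA0, hB, hC, hD, hX z]
    exact key_product A₁ B₁ C₁ D₁ A₂ B₂ C₂ D₂ (X₁ z) (X₂ z)
      (hX₁ z hz) (hX₂ z hz) hD1 hD2 hDb

end
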